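/- arXiv:2501.08833 — 2 statements merged into one kernel-verified Lean document; each statement's English description precedes it below -/
import Mathlib

section
/- If λ and μ are partitions of n with λ > μ in dominance order, and i is the least index with λ_i > μ_i, and j > i is the least index with λ₁+...+λ_j = μ₁+...+μ_j, then μ_{i−1} > μ_i (when i ≥ 2) and μ_j > μ_{j+1}. -/
/-- The parts of a partition sorted in weakly decreasing order. -/
def partsList {n : ℕ} (p : Nat.Partition n) : List ℕ := p.parts.sort (· ≥ ·)

/-- The `i`-th part (1-indexed) of a partition, with the convention that
`part p i = 0` for `i` beyond the length. -/
def part {n : ℕ} (p : Nat.Partition n) (i : ℕ) : ℕ := (partsList p).getD (i - 1) 0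

/-- The partial sum `λ₁ + ⋯ + λ_j`. -/
def psum {n : ℕ} (p : Nat.Partition n) (j : ℕ) : ℕ := ∑ i ∈ Finset.range j, part p (i + 1)

/-- Dominance ordering: `Dominates l m` means `l ≥ m`, i.e. every partial sum of `l`
is at least the corresponding partial sum of `m`. -/
def Dominates {n : ℕ} (l m : Nat.Partition n) : Prop := ∀ j, psum m j ≤ psum l j

/-- Strict dominance: `l > m`. -/
def SDom {n : ℕ} (l m : Nat.Partition n) : Prop := Dominates l m ∧ l ≠ m

/-- The number of (nonzero) parts of a partition. -/
def plen {n : ℕ} (p : Nat.Partition n) : ℕ := Multiset.card p.parts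

/-- `l` covers `m` in the dominance order: `l > m` and nothing strictly in between. -/
def Covers {n : ℕ} (l m : Nat.Partition n) : Prop :=
  SDom l m ∧ ¬ ∃ ν : Nat.Partition n, SDom l ν ∧ SDom ν m

lemma getD_anti {L : List ℕ} (hL : L.Pairwise (· ≥ ·)) {a b : ℕ} (h : a ≤ b) :
    L.getD b 0 ≤ L.getD a 0 := by
  by_cases hb : b < L.length
  · have ha : a < L.length := lt_of_le_of_lt h hb
    rw [List.getD_eq_getElem _ _ hb, List.getD_eq_getElem _ _ ha]
    rcases eq_or_lt_of_le h with rfl | h'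
    · exact le_refl _
    · exact List.pairwise_iff_getElem.mp hL a b ha hb h'
  · rw [List.getD_eq_default _ _ (le_of_not_gt hb)]
    exact Nat.zero_le _

lemma part_anti {n : ℕ} (p : Nat.Partition n) {a b : ℕ} (h : a ≤ b) :
    part p b ≤ part p a := by
  unfold part partsList
  exact getD_anti (p.parts.pairwise_sort _) (Nat.sub_le_sub_right h 1)

lemma psum_succ {n : ℕ} (p : Nat.Partition n) (k : ℕ) :
    psum p (k + 1) = psum p k + part p (k + 1) := Finset.sum_range_succ _ _

/-- If `λ > μ` in dominance order, `i` is the least index with `λ_i > μ_i` and `j > i`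
is the least index with `λ₁+⋯+λ_j = μ₁+⋯+μ_j`, then `μ_{i-1} > μ_i` (when `i ≥ 2`)
and `μ_j > μ_{j+1}`. -/
theorem strict_parts_at_extremal_indices (n : ℕ) (l m : Nat.Partition n)
    (hdom : Dominates l m) (hne : l ≠ m) (i j : ℕ)
    (hi1 : 1 ≤ i) (hi : part m i < part l i)
    (himin : ∀ k, 1 ≤ k → k < i → ¬ part m k < part l k)
    (hij : i < j) (hj : psum l j = psum m j)
    (hjmin : ∀ k, i < k → k < j → psum l k ≠ psum m k) :
    (2 ≤ i → part m i < part m (i - 1)) ∧ part m (j + 1) < part m j := by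
  constructor
  · intro h2
    have h1 : part l (i - 1) ≤ part m (i - 1) :=
      not_lt.mp (himin (i - 1) (by omega) (by omega))
    have h3 : part l i ≤ part l (i - 1) := part_anti l (Nat.sub_le i 1)
    omega
  · -- strict inequality at j - 1
    have hji : i ≤ j - 1 := by omega
    have hstrict : psum m (j - 1) < psum l (j - 1) := by
      rcases eq_or_lt_of_le hji with heq | hlt
      · -- j - 1 = i
        have hA : psum l i = psum l (i - 1) + part l i := by
          have := psum_succ l (i - 1)
          rwa [Nat.sub_add_cancel hi1] at this
        have hB : psum m i = psum m (i - 1) + part m i := by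
          have := psum_succ m (i - 1)
          rwa [Nat.sub_add_cancel hi1] at this
        have hd := hdom (i - 1)
        rw [← heq]
        omega
      · exact lt_of_le_of_ne (hdom _) (Ne.symm (hjmin _ hlt (by omega)))
    have hAj : psum l j = psum l (j - 1) + part l j := by
      have := psum_succ l (j - 1)
      rwa [Nat.sub_add_cancel (by omega : 1 ≤ j)] at this
    have hBj : psum m j = psum m (j - 1) + part m j := by
      have := psum_succ m (j - 1)
      rwa [Nat.sub_add_cancel (by omega : 1 ≤ j)] at this
    have hlj : part l j < part m j := by omega
    have hA1 := psum_succ l j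
    have hB1 := psum_succ m j
    have hd1 := hdom (j + 1)
    have hmu : part m (j + 1) ≤ part l (j + 1) := by omega
    have hmono : part l (j + 1) ≤ part l j := part_anti l (Nat.le_succ j)
    omega
end

section
/- If λ covers μ in the dominance order on partitions of n, then the length (number of nonzero parts) of λ equals the length of μ or the length of μ minus one. -/
open List

theorem List.exists_eq_append_cons_replicate_one {s : List ℕ} (hs : ∀ x ∈ s, 0 < x)
    (hlt : s.length < s.sum) : ∃ D a b, s = D ++ a :: replicate b 1 ∧ 2 ≤ a := by
  induction s using List.reverseRecOn with
  | nil => simp at hlt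
  | append_singleton s x ih =>
    by_cases hx : 2 ≤ x
    · exact ⟨s, x, 0, by simp, hx⟩
    · have hx1 : x = 1 := by have := hs x (by simp); omega
      obtain ⟨D, a, b, rfl, ha⟩ :=
        ih (fun y hy => hs y (mem_append_left _ hy)) (by simp [hx1] at hlt; omega)
      exact ⟨D, a, b + 1, by simp [hx1, replicate_succ'], ha⟩

theorem List.sum_take_append_pred_cons_replicate_one (D : List ℕ) {a : ℕ} (ha : 1 ≤ a)
    (b j : ℕ) :
    ((D ++ (a - 1) :: replicate (b + 1) 1).take j).sum = ((D ++ a :: replicate b 1).take j).sum ∨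
      j ≤ (D ++ a :: replicate b 1).length ∧
      ((D ++ a :: replicate b 1).take j).sum + ((D ++ a :: replicate b 1).length - j) =
        (D ++ a :: replicate b 1).sum ∧
      ((D ++ (a - 1) :: replicate (b + 1) 1).take j).sum + 1 =
        ((D ++ a :: replicate b 1).take j).sum := by
  induction D generalizing j with
  | nil =>
    cases j with
    | zero => simp
    | succ j => simp [take_replicate, sum_replicate]; omega
  | cons d D ih =>
    cases j with
    | zero => simp
    | succ j =>
      simp only [cons_append, take_succ_cons, sum_cons, length_cons]
      have := ih j
      omega

theorem List.sum_take_eq_sum_range_getD (s : List ℕ) (j : ℕ) :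
    (s.take j).sum = ∑ i ∈ Finset.range j, s.getD i 0 := by
  induction j with
  | zero => simp
  | succ j ih =>
    rw [Finset.sum_range_succ, ← ih, take_add_one, sum_append, getD_eq_getElem?_getD]
    cases s[j]? <;> simp

section Partition

variable {n : ℕ} (p : Nat.Partition n)

theorem pos_of_mem_partsList {x : ℕ} (hx : x ∈ partsList p) : 0 < x :=
  p.parts_pos ((Multiset.mem_sort _).1 hx)

theorem partsList_pairwise : (partsList p).Pairwise (· ≥ ·) :=
  Multiset.pairwise_sort _ _

theorem sum_partsList : (partsList p).sum = n := by
  rw [← Multiset.sum_coe, partsList, Multiset.sort_eq, p.parts_sum]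

theorem length_partsList : (partsList p).length = plen p :=
  Multiset.length_sort _

theorem partsList_eq_of_parts_eq {s : List ℕ} (hp : p.parts = s) (hs : s.Pairwise (· ≥ ·)) :
    partsList p = s := by
  rw [partsList, hp, Multiset.coe_sort]
  exact mergeSort_eq_self _ hs

theorem psum_eq_sum_take (j : ℕ) : psum p j = ((partsList p).take j).sum := by
  simp [psum, part, sum_take_eq_sum_range_getD]

theorem psum_add_plen_sub_le (j : ℕ) : psum p j + (plen p - j) ≤ n := by
  have htail : ((partsList p).drop j).length ≤ ((partsList p).drop j).sum :=
    length_le_sum_of_one_le _ fun _ hx => pos_of_mem_partsList p (mem_of_mem_drop hx)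
  rw [length_drop, length_partsList] at htail
  have := congrArg sum (take_append_drop j (partsList p))
  rw [sum_append, sum_partsList] at this
  rw [psum_eq_sum_take]
  omega

theorem psum_of_plen_le {j : ℕ} (h : plen p ≤ j) : psum p j = n := by
  rw [psum_eq_sum_take, take_of_length_le (by rwa [length_partsList]), sum_partsList]

theorem plen_le_self : plen p ≤ n := by
  simpa [psum] using psum_add_plen_sub_le p 0

theorem plen_le_plen_of_dominates {q : Nat.Partition n} (h : Dominates p q) : plen p ≤ plen q := by
  have := h (plen q)
  have := psum_add_plen_sub_le p (plen q)
  rw [psum_of_plen_le q le_rfl] at *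
  omega

theorem exists_plen_eq_succ_of_plen_lt (h : plen p < n) :
    ∃ q : Nat.Partition n, plen q = plen p + 1 ∧ ∀ j, psum q j = psum p j ∨
      j ≤ plen p ∧ psum p j + (plen p - j) = n ∧ psum q j + 1 = psum p j := by
  obtain ⟨D, a, b, hs, ha⟩ := exists_eq_append_cons_replicate_one (fun _ => pos_of_mem_partsList p)
    (by rwa [length_partsList, sum_partsList])
  have hsorted := partsList_pairwise p
  rw [hs] at hsorted
  set t := D ++ (a - 1) :: replicate (b + 1) 1
  have hDa : ∀ d ∈ D, a ≤ d := fun d hd => (pairwise_append.1 hsorted).2.2 d hd a (by simp)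
  have ht_sorted : t.Pairwise (· ≥ ·) := by
    simp only [t, pairwise_append, pairwise_cons, pairwise_replicate, mem_cons, mem_replicate]
    refine ⟨(pairwise_append.1 hsorted).1, ⟨?_, by simp⟩, ?_⟩ <;> grind
  have ht_pos : ∀ x ∈ t, 0 < x := by
    simp only [t, mem_append, mem_cons, mem_replicate]
    grind
  have ht_sum : t.sum = n := by
    have := sum_partsList p
    rw [hs] at this
    simp only [t, sum_append, sum_cons, sum_replicate, smul_eq_mul] at this ⊢
    omega
  let q : Nat.Partition n := ⟨t, fun hx => ht_pos _ hx, by rwa [Multiset.sum_coe]⟩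
  have hq : partsList q = t := partsList_eq_of_parts_eq q rfl ht_sorted
  refine ⟨q, ?_, fun j => ?_⟩
  · rw [← length_partsList, ← length_partsList, hq, hs]
    simp only [t, length_append, length_cons, length_replicate]
    omega
  · have := sum_take_append_pred_cons_replicate_one D (by omega : 1 ≤ a) b j
    rw [← hs, length_partsList, sum_partsList] at this
    rwa [psum_eq_sum_take, psum_eq_sum_take, hq]

end Partition

/-- If `λ` covers `μ` in the dominance order on partitions of `n`, then the number of
parts of `λ` equals that of `μ` or that of `μ` minus one. -/
theorem cover_length (n : ℕ) (l m : Nat.Partition n) (h : Covers l m) :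
    plen l = plen m ∨ plen l + 1 = plen m := by
  obtain ⟨⟨hlm, -⟩, hnone⟩ := h
  have hle := plen_le_plen_of_dominates l hlm
  by_contra! hgap
  obtain ⟨ν, hν, hpsum⟩ := exists_plen_eq_succ_of_plen_lt l (by have := plen_le_self m; omega)
  refine hnone ⟨ν, ⟨fun j => ?_, ?_⟩, fun j => ?_, ?_⟩
  · rcases hpsum j with h | ⟨-, -, h⟩ <;> omega
  · rintro rfl; omega
  · have := hlm j
    have := psum_add_plen_sub_le m j
    rcases hpsum j with h | ⟨hj, hl, h⟩ <;> omega
  · rintro rfl; omega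
end
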